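/- arXiv:2106.04013 — 3 statements merged into one kernel-verified Lean document; each statement's English description precedes it below -/
import Mathlib

section
/- If u is uniformly distributed on the unit sphere S^{n-1} in R^n, then Var[2·‖φ₊(u)‖²] = 3/(n+2). -/
open MeasureTheory ProbabilityTheory Real

noncomputable def relu {n : ℕ} (v : EuclideanSpace ℝ (Fin n)) : EuclideanSpace ℝ (Fin n) :=
  WithLp.toLp 2 (fun i => max (v i) 0)

/-!
Write `X = 2 ‖φ₊(u)‖² = 2 ∑ᵢ (uᵢ)₊²`. Flipping the sign of one coordinate preserves the law
of `u`, and `x₊² + (-x)₊² = x²`, so `E[(uᵢ)₊² g(u)] = E[uᵢ² g(u)] / 2` whenever `g` ignores the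
sign of `uᵢ`. Applied once or twice this gives `E X = E ‖u‖² = 1` and
`E X² = E ‖u‖⁴ + ∑ᵢ E uᵢ⁴ = 1 + ∑ᵢ E uᵢ⁴`, so `Var X = ∑ᵢ E uᵢ⁴`. The orthogonal map
`(xᵢ, xⱼ) ↦ ((xᵢ + xⱼ)/√2, (xᵢ - xⱼ)/√2)` preserves the law too, which yields
`6 E uᵢ² uⱼ² = E uᵢ⁴ + E uⱼ⁴` for `i ≠ j`; summing over all pairs against `E ‖u‖⁴ = 1` gives
`∑ᵢ E uᵢ⁴ = 3 / (n + 2)`.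
-/

namespace EuclideanSpace

variable {ι : Type*} [Fintype ι] [DecidableEq ι]

noncomputable def signFlip (i : ι) : EuclideanSpace ℝ ι ≃ₗᵢ[ℝ] EuclideanSpace ℝ ι :=
  LinearIsometryEquiv.piLpCongrRight 2 fun k =>
    if k = i then LinearIsometryEquiv.neg ℝ else LinearIsometryEquiv.refl ℝ ℝ

theorem signFlip_apply (i : ι) (v : EuclideanSpace ℝ ι) (k : ι) :
    signFlip i v k = if k = i then -v k else v k := by
  by_cases h : k = i <;> simp [signFlip, h]

noncomputable def hadamardMap (i j : ι) : EuclideanSpace ℝ ι →ₗ[ℝ] EuclideanSpace ℝ ι where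
  toFun v := WithLp.toLp 2 fun k =>
    if k = i then (v i + v j) / √2 else if k = j then (v i - v j) / √2 else v k
  map_add' x y := by ext k; simp only [PiLp.add_apply]; split_ifs <;> ring
  map_smul' c x := by
    ext k; simp only [PiLp.smul_apply, smul_eq_mul, RingHom.id_apply]; split_ifs <;> ring

noncomputable def hadamard {i j : ι} (hij : i ≠ j) :
    EuclideanSpace ℝ ι ≃ₗᵢ[ℝ] EuclideanSpace ℝ ι :=
  (LinearMap.isometryOfInner (hadamardMap i j) fun x y => by
    simp only [PiLp.inner_apply, RCLike.inner_apply, conj_trivial]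
    rw [← sub_eq_zero, ← Finset.sum_sub_distrib,
      Finset.sum_eq_add_of_mem i j (Finset.mem_univ _) (Finset.mem_univ _) hij
        fun k _ hk => by simp [hadamardMap, hk.1, hk.2]]
    simp only [hadamardMap, LinearMap.coe_mk, AddHom.coe_mk, PiLp.toLp_apply, if_true,
      if_neg hij.symm]
    rw [div_mul_div_comm, div_mul_div_comm, mul_self_sqrt zero_le_two]
    ring).toLinearIsometryEquiv rfl

theorem hadamard_apply {i j : ι} (hij : i ≠ j) (v : EuclideanSpace ℝ ι) (k : ι) :
    hadamard hij v k =
      if k = i then (v i + v j) / √2 else if k = j then (v i - v j) / √2 else v k := rfl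

end EuclideanSpace

theorem max_sq_add_max_neg_sq (x : ℝ) : max x 0 ^ 2 + max (-x) 0 ^ 2 = x ^ 2 := by
  rcases le_total x 0 with h | h <;> simp [h]

theorem max_sq_mul_max_sq_eq_max_sq_mul_sq (x : ℝ) :
    max x 0 ^ 2 * max x 0 ^ 2 = max x 0 ^ 2 * x ^ 2 := by
  rcases le_total x 0 with h | h <;> simp [h]

theorem norm_relu_sq {n : ℕ} (v : EuclideanSpace ℝ (Fin n)) :
    ‖relu v‖ ^ 2 = ∑ i, max (v i) 0 ^ 2 := by
  simp [EuclideanSpace.real_norm_sq_eq, relu]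

theorem integrable_of_continuous_of_ae_norm_le {E F : Type*} [NormedAddCommGroup E]
    [ProperSpace E] [MeasurableSpace E] [OpensMeasurableSpace E] [NormedAddCommGroup F]
    {ν : Measure E} [IsFiniteMeasure ν] {R : ℝ} (hR : ∀ᵐ v ∂ν, ‖v‖ ≤ R) {g : E → F}
    (hg : Continuous g) : Integrable g ν := by
  obtain ⟨C, hC⟩ := (isCompact_closedBall (0 : E) R).exists_bound_of_continuousOn hg.continuousOn
  exact .of_bound hg.aestronglyMeasurable C
    (hR.mono fun v hv => hC v (mem_closedBall_zero_iff.2 hv))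

open EuclideanSpace

section MomentsOfInvariantMeasures

variable {ι : Type*} [Fintype ι] {ν : Measure (EuclideanSpace ℝ ι)}

theorem sum_integral_sq [IsProbabilityMeasure ν] (hsph : ∀ᵐ v ∂ν, ‖v‖ = 1) :
    ∑ i, ∫ v, v i ^ 2 ∂ν = 1 := by
  rw [← integral_finsetSum _ fun i _ =>
    integrable_of_continuous_of_ae_norm_le (hsph.mono fun v hv => hv.le) (by fun_prop),
    integral_congr_ae (hsph.mono fun v hv => by rw [← real_norm_sq_eq, hv])]
  simp

theorem sum_sum_integral_sq_mul_sq [IsProbabilityMeasure ν] (hsph : ∀ᵐ v ∂ν, ‖v‖ = 1) :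
    ∑ i, ∑ j, ∫ v, v i ^ 2 * v j ^ 2 ∂ν = 1 := by
  have hI : ∀ i j, Integrable (fun v => v i ^ 2 * v j ^ 2) ν := fun i j =>
    integrable_of_continuous_of_ae_norm_le (hsph.mono fun v hv => hv.le) (by fun_prop)
  simp_rw [← integral_finsetSum _ fun j _ => hI _ j]
  rw [← integral_finsetSum _ fun i _ => integrable_finsetSum _ fun j _ => hI i j]
  rw [integral_congr_ae (hsph.mono fun v hv => by
    rw [← Finset.sum_mul_sum, ← real_norm_sq_eq, hv])]
  simp

variable [DecidableEq ι]

theorem integral_max_sq_mul_of_signFlip {i : ι} (hflip : MeasurePreserving (signFlip i) ν ν)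
    {g : EuclideanSpace ℝ ι → ℝ} (hg : Measurable g) (hgi : ∀ v, g (signFlip i v) = g v)
    (hint : Integrable (fun v => v i ^ 2 * g v) ν) :
    ∫ v, max (v i) 0 ^ 2 * g v ∂ν = (∫ v, v i ^ 2 * g v ∂ν) / 2 := by
  have hmax : Measurable fun v : EuclideanSpace ℝ ι => max (v i) 0 ^ 2 * g v := by fun_prop
  have hint_max : Integrable (fun v => max (v i) 0 ^ 2 * g v) ν := by
    refine hint.mono hmax.aestronglyMeasurable (ae_of_all _ fun v => ?_)
    rw [norm_mul, norm_mul]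
    gcongr
    rcases le_total (v i) 0 with h | h <;> simp [h, sq_nonneg]
  have hneg : ∫ v, max (-v i) 0 ^ 2 * g v ∂ν = ∫ v, max (v i) 0 ^ 2 * g v ∂ν := by
    simpa [signFlip_apply, hgi] using
      hflip.integral_comp (signFlip i).toHomeomorph.measurableEmbedding
        fun v => max (v i) 0 ^ 2 * g v
  have hsub : ∫ v, max (-v i) 0 ^ 2 * g v ∂ν =
      ∫ v, v i ^ 2 * g v ∂ν - ∫ v, max (v i) 0 ^ 2 * g v ∂ν := by
    rw [← integral_sub hint hint_max]
    congr with v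
    linear_combination g v * max_sq_add_max_neg_sq (v i)
  linarith

theorem two_mul_integral_max_sq [IsFiniteMeasure ν] {R : ℝ} (hR : ∀ᵐ v ∂ν, ‖v‖ ≤ R) {i : ι}
    (hflip : MeasurePreserving (signFlip i) ν ν) :
    2 * ∫ v, max (v i) 0 ^ 2 ∂ν = ∫ v, v i ^ 2 ∂ν := by
  have h := integral_max_sq_mul_of_signFlip hflip measurable_const (fun _ => rfl)
    (integrable_of_continuous_of_ae_norm_le hR (g := fun v => v i ^ 2 * 1) (by fun_prop))
  simp only [mul_one] at h
  linarith

theorem four_mul_integral_max_sq_mul_max_sq [IsFiniteMeasure ν] {R : ℝ}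
    (hR : ∀ᵐ v ∂ν, ‖v‖ ≤ R) (hflip : ∀ i, MeasurePreserving (signFlip i) ν ν) (i j : ι) :
    4 * ∫ v, max (v i) 0 ^ 2 * max (v j) 0 ^ 2 ∂ν =
      ∫ v, v i ^ 2 * v j ^ 2 ∂ν + if i = j then ∫ v, v i ^ 4 ∂ν else 0 := by
  have hsq : ∀ k v, (signFlip k v) i ^ 2 = v i ^ 2 := fun k v => by
    rw [signFlip_apply]; split_ifs <;> simp
  by_cases hij : i = j
  · subst hij
    have h := integral_max_sq_mul_of_signFlip (hflip i) (by fun_prop) (hsq i)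
      (integrable_of_continuous_of_ae_norm_le hR (g := fun v => v i ^ 2 * v i ^ 2) (by fun_prop))
    have h4 : ∫ v, v i ^ 2 * v i ^ 2 ∂ν = ∫ v, v i ^ 4 ∂ν := by congr with v; ring
    simp only [max_sq_mul_max_sq_eq_max_sq_mul_sq, if_true] at h ⊢
    rw [h, h4]
    ring
  · have hj : ∀ v, max ((signFlip i v) j) 0 ^ 2 = max (v j) 0 ^ 2 := fun v => by
      rw [signFlip_apply, if_neg (Ne.symm hij)]
    have h₁ := integral_max_sq_mul_of_signFlip (hflip i) (by fun_prop) hj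
      (integrable_of_continuous_of_ae_norm_le hR (g := fun v => v i ^ 2 * max (v j) 0 ^ 2)
        (by fun_prop))
    have h₂ := integral_max_sq_mul_of_signFlip (hflip j) (by fun_prop) (hsq j)
      (integrable_of_continuous_of_ae_norm_le hR (g := fun v => v j ^ 2 * v i ^ 2) (by fun_prop))
    have e₁ : ∫ v, v i ^ 2 * max (v j) 0 ^ 2 ∂ν = ∫ v, max (v j) 0 ^ 2 * v i ^ 2 ∂ν := by
      congr with v; ring
    have e₂ : ∫ v, v j ^ 2 * v i ^ 2 ∂ν = ∫ v, v i ^ 2 * v j ^ 2 ∂ν := by congr with v; ring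
    rw [if_neg hij, h₁, e₁, h₂, e₂]
    ring

theorem six_mul_integral_sq_mul_sq_of_hadamard [IsFiniteMeasure ν] {R : ℝ}
    (hR : ∀ᵐ v ∂ν, ‖v‖ ≤ R) {i j : ι} (hij : i ≠ j) (hH : MeasurePreserving (hadamard hij) ν ν) :
    6 * ∫ v, v i ^ 2 * v j ^ 2 ∂ν = ∫ v, v i ^ 4 ∂ν + ∫ v, v j ^ 4 ∂ν := by
  have h₁ : ∫ v, ((v i + v j) / √2) ^ 4 ∂ν = ∫ v, v i ^ 4 ∂ν := by
    simpa [hadamard_apply] using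
      hH.integral_comp (hadamard hij).toHomeomorph.measurableEmbedding fun v => v i ^ 4
  have h₂ : ∫ v, ((v i - v j) / √2) ^ 4 ∂ν = ∫ v, v j ^ 4 ∂ν := by
    simpa [hadamard_apply, hij.symm] using
      hH.integral_comp (hadamard hij).toHomeomorph.measurableEmbedding fun v => v j ^ 4
  have hsqrt : √2 ^ 4 = 4 := by
    rw [show 4 = 2 * 2 by rfl, pow_mul, sq_sqrt zero_le_two]; norm_num
  calc 6 * ∫ v, v i ^ 2 * v j ^ 2 ∂ν
      = ∫ v, 2 * ((v i + v j) / √2) ^ 4 + 2 * ((v i - v j) / √2) ^ 4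
          - (v i ^ 4 + v j ^ 4) ∂ν := by
        rw [← integral_const_mul]
        congr with v
        rw [div_pow, div_pow, hsqrt]
        ring
    _ = 2 * ∫ v, ((v i + v j) / √2) ^ 4 ∂ν + 2 * ∫ v, ((v i - v j) / √2) ^ 4 ∂ν
          - (∫ v, v i ^ 4 ∂ν + ∫ v, v j ^ 4 ∂ν) := by
        rw [integral_sub, integral_add, integral_const_mul, integral_const_mul, integral_add] <;>
          exact integrable_of_continuous_of_ae_norm_le hR (by fun_prop)
    _ = ∫ v, v i ^ 4 ∂ν + ∫ v, v j ^ 4 ∂ν := by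
        rw [h₁, h₂]
        ring

theorem sum_integral_pow_four [IsProbabilityMeasure ν] (hsph : ∀ᵐ v ∂ν, ‖v‖ = 1)
    (hinv : ∀ O : EuclideanSpace ℝ ι ≃ₗᵢ[ℝ] EuclideanSpace ℝ ι, MeasurePreserving O ν ν) :
    ∑ i, ∫ v, v i ^ 4 ∂ν = 3 / (Fintype.card ι + 2) := by
  have h : ∀ i j, 6 * ∫ v, v i ^ 2 * v j ^ 2 ∂ν =
      ∫ v, v i ^ 4 ∂ν + ∫ v, v j ^ 4 ∂ν + if i = j then 4 * ∫ v, v i ^ 4 ∂ν else 0 := by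
    intro i j
    by_cases hij : i = j
    · subst hij
      have h4 : ∫ v, v i ^ 2 * v i ^ 2 ∂ν = ∫ v, v i ^ 4 ∂ν := by congr with v; ring
      rw [if_pos rfl, h4]
      ring
    · rw [if_neg hij, add_zero]
      exact six_mul_integral_sq_mul_sq_of_hadamard (hsph.mono fun v hv => hv.le) hij (hinv _)
  have h6 : ∑ i, ∑ j, 6 * ∫ v, v i ^ 2 * v j ^ 2 ∂ν = 6 := by
    simp_rw [← Finset.mul_sum, sum_sum_integral_sq_mul_sq hsph, mul_one]
  simp_rw [h, Finset.sum_add_distrib, Finset.sum_ite_eq] at h6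
  simp only [Finset.mem_univ, if_true, Finset.sum_const, Finset.card_univ, nsmul_eq_mul,
    ← Finset.mul_sum] at h6
  rw [eq_div_iff (by positivity)]
  linear_combination h6 / 2

theorem variance_two_mul_sum_max_sq [IsProbabilityMeasure ν] (hsph : ∀ᵐ v ∂ν, ‖v‖ = 1)
    (hinv : ∀ O : EuclideanSpace ℝ ι ≃ₗᵢ[ℝ] EuclideanSpace ℝ ι, MeasurePreserving O ν ν) :
    Var[fun v => 2 * ∑ i, max (v i) 0 ^ 2; ν] = 3 / (Fintype.card ι + 2) := by
  have hR : ∀ᵐ v ∂ν, ‖v‖ ≤ 1 := hsph.mono fun v hv => hv.le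
  have hflip : ∀ i, MeasurePreserving (signFlip i) ν ν := fun i => hinv _
  have hmean : ∫ v, 2 * ∑ i, max (v i) 0 ^ 2 ∂ν = 1 := by
    rw [integral_const_mul, integral_finsetSum _ fun i _ =>
      integrable_of_continuous_of_ae_norm_le hR (by fun_prop), Finset.mul_sum]
    simp_rw [two_mul_integral_max_sq hR (hflip _)]
    exact sum_integral_sq hsph
  have hsecond : ∫ v, (2 * ∑ i, max (v i) 0 ^ 2) ^ 2 ∂ν = 1 + ∑ i, ∫ v, v i ^ 4 ∂ν := by
    calc ∫ v, (2 * ∑ i, max (v i) 0 ^ 2) ^ 2 ∂ν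
        = ∫ v, ∑ i, ∑ j, 4 * (max (v i) 0 ^ 2 * max (v j) 0 ^ 2) ∂ν := by
          congr with v
          rw [mul_pow, sq (∑ i, _), Finset.sum_mul_sum, Finset.mul_sum]
          simp_rw [Finset.mul_sum]
          norm_num
      _ = ∑ i, ∑ j, 4 * ∫ v, max (v i) 0 ^ 2 * max (v j) 0 ^ 2 ∂ν := by
          rw [integral_finsetSum _ fun i _ => integrable_finsetSum _ fun j _ =>
            integrable_of_continuous_of_ae_norm_le hR (by fun_prop)]
          refine Finset.sum_congr rfl fun i _ => ?_
          rw [integral_finsetSum _ fun j _ =>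
            integrable_of_continuous_of_ae_norm_le hR (by fun_prop)]
          simp_rw [integral_const_mul]
      _ = 1 + ∑ i, ∫ v, v i ^ 4 ∂ν := by
          simp_rw [four_mul_integral_max_sq_mul_max_sq hR hflip, Finset.sum_add_distrib,
            Finset.sum_ite_eq, Finset.mem_univ, if_true, sum_sum_integral_sq_mul_sq hsph]
  have hmem : MemLp (fun v => 2 * ∑ i, max (v i) 0 ^ 2) 2 ν :=
    (memLp_two_iff_integrable_sq (by fun_prop)).2
      (integrable_of_continuous_of_ae_norm_le hR (by fun_prop))
  rw [variance_eq_sub hmem]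
  simp only [Pi.pow_apply]
  rw [hmean, hsecond, sum_integral_pow_four hsph hinv]
  ring

end MomentsOfInvariantMeasures

/-- If u is uniform on the sphere S^{n-1}, then Var[2‖φ₊(u)‖²] = 3/(n+2). -/
theorem stmt_1 {Ω : Type*} [MeasureSpace Ω] [IsProbabilityMeasure (ℙ : Measure Ω)]
    (n : ℕ) (u : Ω → EuclideanSpace ℝ (Fin n))
    (hu : Measurable u)
    (hsph : ∀ ω, ‖u ω‖ = 1)
    (hrot : ∀ O : EuclideanSpace ℝ (Fin n) ≃ₗᵢ[ℝ] EuclideanSpace ℝ (Fin n),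
      IdentDistrib (fun ω => O (u ω)) u ℙ ℙ) :
    variance (fun ω => 2 * ‖relu (u ω)‖ ^ 2) ℙ = 3 / ((n : ℝ) + 2) := by
  let ν : Measure (EuclideanSpace ℝ (Fin n)) := (ℙ : Measure Ω).map u
  have : IsProbabilityMeasure ν := Measure.isProbabilityMeasure_map hu.aemeasurable
  have hsph' : ∀ᵐ v ∂ν, ‖v‖ = 1 :=
    (ae_map_iff hu.aemeasurable (measurableSet_eq_fun measurable_norm measurable_const)).2
      (ae_of_all _ hsph)
  have hinv : ∀ O : EuclideanSpace ℝ (Fin n) ≃ₗᵢ[ℝ] EuclideanSpace ℝ (Fin n),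
      MeasurePreserving O ν ν := fun O =>
    ⟨O.continuous.measurable, by
      rw [Measure.map_map O.continuous.measurable hu]; exact (hrot O).map_eq⟩
  have hlaw : MeasurePreserving u ℙ ν := ⟨hu, rfl⟩
  simp_rw [norm_relu_sq]
  rw [hlaw.variance_fun_comp (f := fun v => 2 * ∑ i, max (v i) 0 ^ 2) (by fun_prop),
    variance_two_mul_sum_max_sq hsph' hinv, Fintype.card_fin]
end

section
/- Let z ∈ R^n be any random vector and g ∈ R^n an independent standard Gaussian vector. Define X = ‖α e₁ + λ √(2/n) ‖φ₊(z)‖ g‖². Then Var(X) = λ⁴ (n+2)/n · Var[2‖φ₊(z)‖²] + (2λ⁴/n) · E[2‖φ₊(z)‖²]² + (4α²λ²/n) · E[2‖φ₊(z)‖²]. -/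
open MeasureTheory ProbabilityTheory Real

/-!
Write `W = λ √(2/n) ‖φ₊(z)‖`. Expanding the square, `X = α² + Y` with
`Y = 2 α W g₁ + W² ‖g‖²`. Since `W` is independent of `g`, every moment of `Y` factors into a
moment of `W` times a moment of `g`, and the Gaussian moments `E gᵢᵏ` (`k ≤ 4`), read off the
derivatives at `0` of the moment generating function `exp (t² / 2)`, give
`E Y = n E W²` and `E Y² = 4 α² E W² + n (n + 2) E W⁴`.
-/

lemma hasDerivAt_mul_exp_sq_div_two {p : ℝ → ℝ} {p' t : ℝ} (hp : HasDerivAt p p' t) :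
    HasDerivAt (fun t => p t * exp (t ^ 2 / 2)) ((p' + t * p t) * exp (t ^ 2 / 2)) t :=
  (hp.mul ((hasDerivAt_pow 2 t).div_const 2).exp).congr_deriv (by norm_num; ring)

lemma deriv_mul_exp_sq_div_two {p q p' : ℝ → ℝ} (hp : ∀ t, HasDerivAt p (p' t) t)
    (hq : ∀ t, p' t + t * p t = q t) :
    deriv (fun t => p t * exp (t ^ 2 / 2)) = fun t => q t * exp (t ^ 2 / 2) := by
  funext t
  rw [(hasDerivAt_mul_exp_sq_div_two (hp t)).deriv, hq]

lemma iteratedDeriv_exp_sq_div_two_zero :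
    iteratedDeriv 1 (fun t => exp (t ^ 2 / 2)) 0 = 0 ∧
    iteratedDeriv 2 (fun t => exp (t ^ 2 / 2)) 0 = 1 ∧
    iteratedDeriv 3 (fun t => exp (t ^ 2 / 2)) 0 = 0 ∧
    iteratedDeriv 4 (fun t => exp (t ^ 2 / 2)) 0 = 3 := by
  have h1 : deriv (fun t => exp (t ^ 2 / 2)) = fun t => t * exp (t ^ 2 / 2) := by
    simpa using deriv_mul_exp_sq_div_two (p := fun _ => 1) (p' := 0)
      (fun t => hasDerivAt_const t 1) (fun t => by simp)
  have h2 := deriv_mul_exp_sq_div_two (p := fun t => t) (q := fun t => t ^ 2 + 1)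
    (p' := fun _ => 1) hasDerivAt_id' (fun t => by ring)
  have h3 := deriv_mul_exp_sq_div_two (p := fun t => t ^ 2 + 1) (q := fun t => t ^ 3 + 3 * t)
    (p' := fun t => 2 * t) (fun t => by simpa using (hasDerivAt_pow 2 t).add_const 1)
    (fun t => by ring)
  have h4 := deriv_mul_exp_sq_div_two (p := fun t => t ^ 3 + 3 * t)
    (q := fun t => t ^ 4 + 6 * t ^ 2 + 3) (p' := fun t => 3 * t ^ 2 + 3)
    (fun t => by simpa using (hasDerivAt_pow 3 t).fun_add ((hasDerivAt_id t).const_mul 3))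
    (fun t => by ring)
  simp [iteratedDeriv_succ', h1, h2, h3, h4]

lemma integral_pow_gaussianReal_eq_iteratedDeriv (k : ℕ) :
    ∫ x, x ^ k ∂gaussianReal 0 1 = iteratedDeriv k (fun t => exp (t ^ 2 / 2)) 0 := by
  simpa [mgf_fun_id_gaussianReal] using
    (iteratedDeriv_mgf_zero (X := fun x => x) (μ := gaussianReal 0 1) (by simp) k).symm

section EuclideanSpace

variable {ι : Type*} [Fintype ι]

lemma EuclideanSpace.norm_sq_smul_single_add_smul [DecidableEq ι] (a s : ℝ) (j : ι)
    (v : EuclideanSpace ℝ ι) :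
    ‖a • EuclideanSpace.single j (1 : ℝ) + s • v‖ ^ 2 =
      a ^ 2 + 2 * a * s * v j + s ^ 2 * ‖v‖ ^ 2 := by
  rw [norm_add_sq_real, inner_smul_left, inner_smul_right, EuclideanSpace.inner_single_left,
    norm_smul, norm_smul, PiLp.norm_single]
  simp [mul_pow]
  ring

-- `v j ^ 1` rather than `v j`: each summand then has the shape of a mixed moment
-- `v i ^ p * v k ^ q`.
lemma EuclideanSpace.mul_norm_sq_eq_sum (v : EuclideanSpace ℝ ι) (j : ι) :
    v j * ‖v‖ ^ 2 = ∑ i, v j ^ 1 * v i ^ 2 := by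
  simp [EuclideanSpace.real_norm_sq_eq, Finset.mul_sum]

lemma EuclideanSpace.norm_pow_four_eq_sum (v : EuclideanSpace ℝ ι) :
    ‖v‖ ^ 4 = ∑ i, ∑ k, v i ^ 2 * v k ^ 2 := by
  rw [show ‖v‖ ^ 4 = (‖v‖ ^ 2) ^ 2 by ring, EuclideanSpace.real_norm_sq_eq, sq,
    Finset.sum_mul_sum]

end EuclideanSpace

lemma ProbabilityTheory.IndepFun.integrable_and_integral_pow_mul_comp {Ω β : Type*} [MeasurableSpace Ω]
    [MeasurableSpace β] {μ : Measure Ω} {W : Ω → ℝ} {Y : Ω → β} (h : IndepFun W Y μ) {p : ℕ}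
    {Φ : β → ℝ} (hΦ : Measurable Φ) (hW : Integrable (fun ω => W ω ^ p) μ)
    (hΦY : Integrable (fun ω => Φ (Y ω)) μ) :
    Integrable (fun ω => W ω ^ p * Φ (Y ω)) μ ∧
      ∫ ω, W ω ^ p * Φ (Y ω) ∂μ = μ[W ^ p] * ∫ ω, Φ (Y ω) ∂μ :=
  have hind := h.comp (measurable_id.pow_const p) hΦ
  ⟨hind.integrable_mul hW hΦY, hind.integral_fun_mul_eq_mul_integral hW.1 hΦY.1⟩

structure IsStdGaussianVector {Ω ι : Type*} [MeasurableSpace Ω] (g : Ω → EuclideanSpace ℝ ι)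
    (μ : Measure Ω) : Prop where
  map_coord : ∀ i, μ.map (fun ω => g ω i) = gaussianReal 0 1
  iIndepFun_coord : iIndepFun (fun i ω => g ω i) μ

namespace IsStdGaussianVector

variable {Ω ι : Type*} [MeasurableSpace Ω] {μ : Measure Ω} {g : Ω → EuclideanSpace ℝ ι}

lemma identDistrib_coord (hg : IsStdGaussianVector g μ) (i : ι) :
    IdentDistrib (fun ω => g ω i) id μ (gaussianReal 0 1) where
  aemeasurable_fst :=
    .of_map_ne_zero (by simpa [hg.map_coord i] using IsProbabilityMeasure.ne_zero _)
  aemeasurable_snd := aemeasurable_id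
  map_eq := by simp [hg.map_coord i]

lemma integrable_coord_pow (hg : IsStdGaussianVector g μ) (i : ι) (k : ℕ) :
    Integrable (fun ω => g ω i ^ k) μ :=
  ((hg.identDistrib_coord i).comp (measurable_id.pow_const k)).integrable_iff.2
    (integrable_pow_of_mem_interior_integrableExpSet (by simp) k)

lemma integral_coord_pow (hg : IsStdGaussianVector g μ) (i : ι) (k : ℕ) :
    ∫ ω, g ω i ^ k ∂μ = iteratedDeriv k (fun t => exp (t ^ 2 / 2)) 0 := by
  rw [← integral_pow_gaussianReal_eq_iteratedDeriv]
  exact ((hg.identDistrib_coord i).comp (measurable_id.pow_const k)).integral_eq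

lemma integral_coord (hg : IsStdGaussianVector g μ) (i : ι) : ∫ ω, g ω i ∂μ = 0 := by
  simpa [iteratedDeriv_exp_sq_div_two_zero] using hg.integral_coord_pow i 1

lemma integrable_coord_pow_mul_coord_pow (hg : IsStdGaussianVector g μ) (i j : ι) (p q : ℕ) :
    Integrable (fun ω => g ω i ^ p * g ω j ^ q) μ := by
  obtain rfl | hij := eq_or_ne i j
  · simpa [pow_add] using hg.integrable_coord_pow i (p + q)
  · exact ((hg.iIndepFun_coord.indepFun hij).comp (measurable_id.pow_const p)
      (measurable_id.pow_const q)).integrable_mul (hg.integrable_coord_pow i p)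
      (hg.integrable_coord_pow j q)

lemma integral_coord_pow_mul_coord_pow [DecidableEq ι] (hg : IsStdGaussianVector g μ)
    (i j : ι) (p q : ℕ) :
    ∫ ω, g ω i ^ p * g ω j ^ q ∂μ =
      if i = j then iteratedDeriv (p + q) (fun t => exp (t ^ 2 / 2)) 0
      else iteratedDeriv p (fun t => exp (t ^ 2 / 2)) 0 *
        iteratedDeriv q (fun t => exp (t ^ 2 / 2)) 0 := by
  split_ifs with hij
  · simp [hij, ← pow_add, hg.integral_coord_pow]
  · rw [← hg.integral_coord_pow i, ← hg.integral_coord_pow j]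
    exact ((hg.iIndepFun_coord.indepFun hij).comp (measurable_id.pow_const p)
      (measurable_id.pow_const q)).integral_fun_mul_eq_mul_integral
      (hg.integrable_coord_pow i p).1 (hg.integrable_coord_pow j q).1

variable [Fintype ι]

lemma integrable_norm_sq (hg : IsStdGaussianVector g μ) :
    Integrable (fun ω => ‖g ω‖ ^ 2) μ := by
  simp_rw [EuclideanSpace.real_norm_sq_eq]
  exact integrable_finsetSum _ fun i _ => hg.integrable_coord_pow i 2

lemma integral_norm_sq (hg : IsStdGaussianVector g μ) :
    ∫ ω, ‖g ω‖ ^ 2 ∂μ = Fintype.card ι := by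
  simp_rw [EuclideanSpace.real_norm_sq_eq]
  rw [integral_finsetSum _ fun i _ => hg.integrable_coord_pow i 2]
  simp [hg.integral_coord_pow, iteratedDeriv_exp_sq_div_two_zero]

lemma integrable_coord_mul_norm_sq (hg : IsStdGaussianVector g μ) (j : ι) :
    Integrable (fun ω => g ω j * ‖g ω‖ ^ 2) μ := by
  simp_rw [EuclideanSpace.mul_norm_sq_eq_sum]
  exact integrable_finsetSum _ fun i _ => hg.integrable_coord_pow_mul_coord_pow j i 1 2

lemma integral_coord_mul_norm_sq (hg : IsStdGaussianVector g μ) (j : ι) :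
    ∫ ω, g ω j * ‖g ω‖ ^ 2 ∂μ = 0 := by
  classical
  simp_rw [EuclideanSpace.mul_norm_sq_eq_sum]
  rw [integral_finsetSum _ fun i _ => hg.integrable_coord_pow_mul_coord_pow j i 1 2]
  simp only [hg.integral_coord_pow_mul_coord_pow]
  simp [iteratedDeriv_exp_sq_div_two_zero]

lemma integrable_norm_pow_four (hg : IsStdGaussianVector g μ) :
    Integrable (fun ω => ‖g ω‖ ^ 4) μ := by
  simp_rw [EuclideanSpace.norm_pow_four_eq_sum]
  exact integrable_finsetSum _ fun i _ => integrable_finsetSum _ fun k _ =>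
    hg.integrable_coord_pow_mul_coord_pow i k 2 2

lemma integral_norm_pow_four (hg : IsStdGaussianVector g μ) :
    ∫ ω, ‖g ω‖ ^ 4 ∂μ = Fintype.card ι * (Fintype.card ι + 2) := by
  classical
  simp_rw [EuclideanSpace.norm_pow_four_eq_sum]
  rw [integral_finsetSum _ fun i _ => integrable_finsetSum _ fun k _ =>
    hg.integrable_coord_pow_mul_coord_pow i k 2 2]
  simp_rw [integral_finsetSum _ fun k _ => hg.integrable_coord_pow_mul_coord_pow _ k 2 2]
  simp only [hg.integral_coord_pow_mul_coord_pow]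
  have ite_three (i k : ι) : (if i = k then (3 : ℝ) else 1) = 1 + if i = k then 2 else 0 := by
    split_ifs <;> norm_num
  simp [iteratedDeriv_exp_sq_div_two_zero, ite_three, Finset.sum_add_distrib]
  ring

theorem variance_norm_sq_smul_single_add_smul [IsProbabilityMeasure μ] [DecidableEq ι]
    (hg : IsStdGaussianVector g μ) {W : Ω → ℝ}
    (hW : ∀ k ≤ 4, Integrable (fun ω => W ω ^ k) μ) (hWg : IndepFun W g μ) (a : ℝ) (j : ι) :
    Var[fun ω => ‖a • EuclideanSpace.single j (1 : ℝ) + W ω • g ω‖ ^ 2; μ] =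
      Fintype.card ι * (Fintype.card ι + 2) * μ[W ^ 4] - Fintype.card ι ^ 2 * μ[W ^ 2] ^ 2
        + 4 * a ^ 2 * μ[W ^ 2] := by
  obtain ⟨i1, e1⟩ := hWg.integrable_and_integral_pow_mul_comp (p := 1) (Φ := fun v => v j)
    (by fun_prop) (hW 1 (by norm_num)) (by simpa using hg.integrable_coord_pow j 1)
  obtain ⟨i2, e2⟩ := hWg.integrable_and_integral_pow_mul_comp (p := 2) (Φ := fun v => ‖v‖ ^ 2)
    (by fun_prop) (hW 2 (by norm_num)) hg.integrable_norm_sq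
  obtain ⟨i3, e3⟩ := hWg.integrable_and_integral_pow_mul_comp (p := 2) (Φ := fun v => v j ^ 2)
    (by fun_prop) (hW 2 (by norm_num)) (hg.integrable_coord_pow j 2)
  obtain ⟨i4, e4⟩ := hWg.integrable_and_integral_pow_mul_comp (p := 3)
    (Φ := fun v => v j * ‖v‖ ^ 2) (by fun_prop) (hW 3 (by norm_num))
    (hg.integrable_coord_mul_norm_sq j)
  obtain ⟨i5, e5⟩ := hWg.integrable_and_integral_pow_mul_comp (p := 4) (Φ := fun v => ‖v‖ ^ 4)
    (by fun_prop) (hW 4 le_rfl) hg.integrable_norm_pow_four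
  set Y : Ω → ℝ := fun ω => 2 * a * (W ω ^ 1 * g ω j) + W ω ^ 2 * ‖g ω‖ ^ 2
  have hX : (fun ω => ‖a • EuclideanSpace.single j (1 : ℝ) + W ω • g ω‖ ^ 2) =
      fun ω => a ^ 2 + Y ω := by
    funext ω
    rw [EuclideanSpace.norm_sq_smul_single_add_smul]
    ring
  have hY_sq : (fun ω => Y ω ^ 2) = fun ω => 4 * a ^ 2 * (W ω ^ 2 * g ω j ^ 2) +
      (4 * a * (W ω ^ 3 * (g ω j * ‖g ω‖ ^ 2)) + W ω ^ 4 * ‖g ω‖ ^ 4) := by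
    funext ω
    ring
  have hY : Integrable Y μ := (i1.const_mul _).fun_add i2
  have hY_memLp : MemLp Y 2 μ := by
    refine (memLp_two_iff_integrable_sq hY.1).2 ?_
    rw [hY_sq]
    exact (i3.const_mul _).fun_add ((i4.const_mul _).fun_add i5)
  have EY : μ[Y] = (Fintype.card ι : ℝ) * μ[W ^ 2] := by
    rw [integral_add (i1.const_mul _) i2, integral_const_mul, e1, e2, hg.integral_coord,
      hg.integral_norm_sq]
    ring
  have EY_sq : ∫ ω, Y ω ^ 2 ∂μ =
      4 * a ^ 2 * μ[W ^ 2] + Fintype.card ι * (Fintype.card ι + 2) * μ[W ^ 4] := by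
    rw [hY_sq, integral_add (i3.const_mul _) ((i4.const_mul _).fun_add i5),
      integral_add (i4.const_mul _) i5, integral_const_mul, integral_const_mul, e3, e4, e5,
      hg.integral_coord_pow, hg.integral_coord_mul_norm_sq, hg.integral_norm_pow_four,
      iteratedDeriv_exp_sq_div_two_zero.2.1]
    ring
  rw [hX, variance_const_add hY.1, variance_eq_sub hY_memLp]
  change ∫ ω, Y ω ^ 2 ∂μ - μ[Y] ^ 2 = _
  rw [EY_sq, EY]
  ring

end IsStdGaussianVector

theorem stmt_10_general {Ω : Type*} [MeasureSpace Ω] [IsProbabilityMeasure (ℙ : Measure Ω)]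
    (n : ℕ) (hn : 0 < n) (a l : ℝ)
    (z g : Ω → EuclideanSpace ℝ (Fin n))
    (hgauss : ∀ i, Measure.map (fun ω => g ω i) ℙ = gaussianReal 0 1)
    (hgindep : iIndepFun (fun i ω => g ω i) ℙ)
    (hzg : IndepFun z g ℙ)
    (hmom : ∀ p : ℕ, Integrable (fun ω => ‖relu (z ω)‖ ^ p) ℙ)
    (X : Ω → ℝ)
    (hX : X = fun ω => ‖a • EuclideanSpace.single (⟨0, hn⟩ : Fin n) (1 : ℝ)
      + (l * Real.sqrt (2 / n) * ‖relu (z ω)‖) • g ω‖ ^ 2) :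
    variance X ℙ
      = l ^ 4 * (((n : ℝ) + 2) / n) * variance (fun ω => 2 * ‖relu (z ω)‖ ^ 2) ℙ
        + 2 * l ^ 4 / n * (∫ ω, 2 * ‖relu (z ω)‖ ^ 2 ∂ℙ) ^ 2
        + 4 * a ^ 2 * l ^ 2 / n * ∫ ω, 2 * ‖relu (z ω)‖ ^ 2 ∂ℙ := by
  set c := l * √(2 / n)
  have hc : c ^ 2 = l ^ 2 * (2 / n) := by rw [mul_pow, Real.sq_sqrt (by positivity)]
  have hW_pow (k : ℕ) :
      (fun ω => (c * ‖relu (z ω)‖) ^ k) = fun ω => c ^ k * ‖relu (z ω)‖ ^ k := by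
    simp only [mul_pow]
  have hWg : IndepFun (fun ω => c * ‖relu (z ω)‖) g ℙ :=
    hzg.comp (φ := fun v => c * ‖relu v‖) (by unfold relu; fun_prop) measurable_id
  have hR_sq : MemLp (fun ω => ‖relu (z ω)‖ ^ 2) 2 ℙ :=
    (memLp_two_iff_integrable_sq (hmom 2).1).2 (by simpa [← pow_mul] using hmom 4)
  rw [hX, IsStdGaussianVector.variance_norm_sq_smul_single_add_smul ⟨hgauss, hgindep⟩
      (fun k _ => by simpa only [hW_pow] using (hmom k).const_mul (c ^ k)) hWg,
    variance_const_mul, variance_eq_sub hR_sq]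
  simp only [Pi.pow_apply, hW_pow, integral_const_mul, Fintype.card_fin, ← pow_mul]
  rw [show c ^ 4 = (c ^ 2) ^ 2 by ring, hc]
  field_simp
  ring

/-- Variance of X = ‖α e₁ + λ√(2/n)‖φ₊(z)‖ g‖² for z any random vector and
g an independent standard Gaussian vector. -/
theorem stmt_10 {Ω : Type*} [MeasureSpace Ω] [IsProbabilityMeasure (ℙ : Measure Ω)]
    (n : ℕ) (hn : 0 < n) (a l : ℝ)
    (z g : Ω → EuclideanSpace ℝ (Fin n)) (hz : Measurable z) (hg : Measurable g)
    (hgauss : ∀ i, Measure.map (fun ω => g ω i) ℙ = gaussianReal 0 1)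
    (hgindep : iIndepFun (fun i ω => g ω i) ℙ)
    (hzg : IndepFun z g ℙ)
    (hmom : ∀ p : ℕ, Integrable (fun ω => ‖relu (z ω)‖ ^ p) ℙ)
    (X : Ω → ℝ)
    (hX : X = fun ω => ‖a • EuclideanSpace.single (⟨0, hn⟩ : Fin n) (1 : ℝ)
      + (l * Real.sqrt (2 / n) * ‖relu (z ω)‖) • g ω‖ ^ 2) :
    variance X ℙ
      = l ^ 4 * (((n : ℝ) + 2) / n) * variance (fun ω => 2 * ‖relu (z ω)‖ ^ 2) ℙ
        + 2 * l ^ 4 / n * (∫ ω, 2 * ‖relu (z ω)‖ ^ 2 ∂ℙ) ^ 2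
        + 4 * a ^ 2 * l ^ 2 / n * ∫ ω, 2 * ‖relu (z ω)‖ ^ 2 ∂ℙ :=
  stmt_10_general n hn a l z g hgauss hgindep hzg hmom X hX
end

section
/- Let Z, W be independent N(0,1) random variables and θ ∈ [0,π]. Then 2·E[φ₊(Z)² φ₊(cos(θ)Z + sin(θ)W)²] = (3 sin(θ)cos(θ) + (π−θ)(1 + 2cos²(θ)))/π. -/
/-!
By independence `(Z, W)` has law `γ ⊗ γ`, whose density `(2π)⁻¹ e^{-r²/2}` depends only on the
radius. The integrand is positively homogeneous of degree 4, so in polar coordinates the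
expectation factors into the radial moment `∫₀^∞ r⁵ e^{-r²/2} dr = 8` and an angular integral.
On `(-π, π)` the angular integrand vanishes outside `[θ - π/2, π/2]`, where it is
`cos² t cos² (t - θ)`, which has an elementary primitive.
-/
open MeasureTheory ProbabilityTheory Real Set

lemma integral_Ioi_pow_five_mul_exp_neg_sq_div_two :
    ∫ r in Ioi (0 : ℝ), r ^ 5 * exp (-r ^ 2 / 2) = 8 := by
  have h := integral_rpow_mul_exp_neg_mul_rpow (p := 2) (q := 5) (b := 1 / 2)
    two_pos (by norm_num) (by norm_num)
  norm_num at h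
  convert h using 3 with r
  ring_nf

lemma integral_gaussianReal_prod_eq_integral_smul {E : Type*} [NormedAddCommGroup E]
    [NormedSpace ℝ E] {μ₁ μ₂ : ℝ} {v₁ v₂ : NNReal} (hv₁ : v₁ ≠ 0) (hv₂ : v₂ ≠ 0)
    (f : ℝ × ℝ → E) :
    ∫ p, f p ∂((gaussianReal μ₁ v₁).prod (gaussianReal μ₂ v₂))
      = ∫ p, (gaussianPDFReal μ₁ v₁ p.1 * gaussianPDFReal μ₂ v₂ p.2) • f p := by
  rw [gaussianReal_of_var_ne_zero _ hv₁, gaussianReal_of_var_ne_zero _ hv₂,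
    prod_withDensity (measurable_gaussianPDF _ _) (measurable_gaussianPDF _ _),
    integral_withDensity_eq_integral_toReal_smul (by fun_prop)
      (ae_of_all _ fun _ ↦ ENNReal.mul_lt_top gaussianPDF_lt_top gaussianPDF_lt_top),
    ← Measure.volume_eq_prod]
  simp only [ENNReal.toReal_mul, toReal_gaussianPDF]

lemma gaussianPDFReal_mul_gaussianPDFReal_polar (r t : ℝ) :
    gaussianPDFReal 0 1 (r * cos t) * gaussianPDFReal 0 1 (r * sin t)
      = (2 * π)⁻¹ * exp (-r ^ 2 / 2) := by
  have hr : -(r * cos t) ^ 2 / 2 + -(r * sin t) ^ 2 / 2 = -r ^ 2 / 2 := by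
    linear_combination (-r ^ 2 / 2) * sin_sq_add_cos_sq t
  simp only [gaussianPDFReal, NNReal.coe_one, mul_one, sub_zero]
  rw [mul_mul_mul_comm, ← mul_inv, mul_self_sqrt (by positivity), ← exp_add, hr]

lemma hasDerivAt_primitive_cos_sq_mul_cos_sub_sq (θ x : ℝ) :
    HasDerivAt
      (fun x ↦ (x * (2 + cos (2 * θ)) + sin (2 * x) + sin (2 * x - 2 * θ)
        + sin (4 * x - 2 * θ) / 4) / 8)
      (cos x ^ 2 * cos (x - θ) ^ 2) x := by
  have h := (((((hasDerivAt_id' x).mul_const (2 + cos (2 * θ))).add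
    ((hasDerivAt_id' x).const_mul 2).sin).add
    (((hasDerivAt_id' x).const_mul 2).sub_const (2 * θ)).sin).add
    ((((hasDerivAt_id' x).const_mul 4).sub_const (2 * θ)).sin.div_const 4)).div_const 8
  refine h.congr_deriv ?_
  rw [show 2 * θ = 2 * x - 2 * (x - θ) by ring,
    show 2 * x - (2 * x - 2 * (x - θ)) = 2 * (x - θ) by ring,
    show 4 * x - (2 * x - 2 * (x - θ)) = 2 * x + 2 * (x - θ) by ring,
    cos_sub, cos_add, cos_two_mul x, cos_two_mul (x - θ), sin_two_mul, sin_two_mul]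
  ring

lemma integral_cos_sq_mul_cos_sub_sq (θ : ℝ) :
    ∫ x in (θ - π / 2)..(π / 2), cos x ^ 2 * cos (x - θ) ^ 2
      = (3 * sin θ * cos θ + (π - θ) * (1 + 2 * cos θ ^ 2)) / 8 := by
  rw [intervalIntegral.integral_eq_sub_of_hasDerivAt
    (fun x _ ↦ hasDerivAt_primitive_cos_sq_mul_cos_sub_sq θ x)
    ((by fun_prop : Continuous _).intervalIntegrable _ _)]
  rw [show 2 * (π / 2) - 2 * θ = π - 2 * θ by ring, show 2 * (π / 2) = π by ring,
    show 4 * (π / 2) - 2 * θ = -(2 * θ) + 2 * π by ring,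
    show 2 * (θ - π / 2) - 2 * θ = -π by ring, show 2 * (θ - π / 2) = -(π - 2 * θ) by ring,
    show 4 * (θ - π / 2) - 2 * θ = 2 * θ - 2 * π by ring]
  simp only [sin_pi, sin_pi_sub, sin_add_two_pi, sin_neg, sin_sub_two_pi, sin_two_mul,
    cos_two_mul]
  ring

lemma max_cos_sq_mul_max_cos_sub_sq_eq_indicator {θ x : ℝ} (hθ : θ ∈ Icc 0 π)
    (hx : x ∈ Ioo (-π) π) :
    max (cos x) 0 ^ 2 * max (cos (x - θ)) 0 ^ 2
      = (Icc (θ - π / 2) (π / 2)).indicator (fun x ↦ cos x ^ 2 * cos (x - θ) ^ 2) x := by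
  obtain ⟨hθ₀, hθ₁⟩ := hθ
  obtain ⟨hx₀, hx₁⟩ := hx
  by_cases hmem : x ∈ Icc (θ - π / 2) (π / 2)
  · have h₁ : 0 ≤ cos x := cos_nonneg_of_mem_Icc ⟨by linarith [hmem.1], hmem.2⟩
    have h₂ : 0 ≤ cos (x - θ) :=
      cos_nonneg_of_mem_Icc ⟨by linarith [hmem.1], by linarith [hmem.2]⟩
    rw [indicator_of_mem hmem, max_eq_left h₁, max_eq_left h₂]
  · rw [indicator_of_notMem hmem]
    rcases le_or_gt x (-(π / 2)) with hle | hgt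
    · have : cos x ≤ 0 := by
        rw [← cos_neg]; exact cos_nonpos_of_pi_div_two_le_of_le (by linarith) (by linarith)
      simp [max_eq_right this]
    rcases lt_or_ge x (θ - π / 2) with hlt | hge
    · have : cos (x - θ) ≤ 0 := by
        rw [← cos_neg]; exact cos_nonpos_of_pi_div_two_le_of_le (by linarith) (by linarith)
      simp [max_eq_right this]
    · have : cos x ≤ 0 :=
        cos_nonpos_of_pi_div_two_le_of_le (not_lt.mp fun h ↦ hmem ⟨hge, h.le⟩) (by linarith)
      simp [max_eq_right this]

lemma integral_max_cos_sq_mul_max_cos_sub_sq {θ : ℝ} (hθ : θ ∈ Icc 0 π) :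
    ∫ x in Ioo (-π) π, max (cos x) 0 ^ 2 * max (cos (x - θ)) 0 ^ 2
      = (3 * sin θ * cos θ + (π - θ) * (1 + 2 * cos θ ^ 2)) / 8 := by
  have hsub : Icc (θ - π / 2) (π / 2) ⊆ Ioo (-π) π :=
    Icc_subset_Ioo (by linarith [hθ.1, pi_pos]) (by linarith [pi_pos])
  rw [setIntegral_congr_fun measurableSet_Ioo
      (fun x hx ↦ max_cos_sq_mul_max_cos_sub_sq_eq_indicator hθ hx),
    setIntegral_indicator measurableSet_Icc, inter_eq_right.mpr hsub,
    integral_Icc_eq_integral_Ioc,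
    ← intervalIntegral.integral_of_le (by linarith [hθ.2]), integral_cos_sq_mul_cos_sub_sq]

lemma integral_gaussianReal_prod_of_homogeneous {F : ℝ × ℝ → ℝ} {k : ℕ}
    (hF : ∀ r > 0, ∀ p, F (r • p) = r ^ k * F p) :
    ∫ p, F p ∂((gaussianReal 0 1).prod (gaussianReal 0 1))
      = (2 * π)⁻¹ * ((∫ r in Ioi 0, r ^ (k + 1) * exp (-r ^ 2 / 2))
          * ∫ t in Ioo (-π) π, F (cos t, sin t)) := by
  rw [integral_gaussianReal_prod_eq_integral_smul one_ne_zero one_ne_zero,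
    ← integral_comp_polarCoord_symm, polarCoord_target]
  calc
    _ = ∫ p in Ioi 0 ×ˢ Ioo (-π) π,
          (2 * π)⁻¹ * ((p.1 ^ (k + 1) * exp (-p.1 ^ 2 / 2)) * F (cos p.2, sin p.2)) := by
      refine setIntegral_congr_fun (measurableSet_Ioi.prod measurableSet_Ioo) fun p hp ↦ ?_
      have hpolar : polarCoord.symm p = p.1 • (cos p.2, sin p.2) := by
        simp [polarCoord_symm_apply]
      rw [hpolar, hF p.1 hp.1]
      simp only [Prod.smul_mk, smul_eq_mul]
      rw [gaussianPDFReal_mul_gaussianPDFReal_polar]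
      ring
    _ = _ := by
      rw [integral_const_mul, Measure.volume_eq_prod, ← Measure.prod_restrict,
        integral_prod_mul (fun r : ℝ ↦ r ^ (k + 1) * exp (-r ^ 2 / 2))
          (fun t ↦ F (cos t, sin t))]

/-- The arc-cosine kernel identity of Cho–Saul: for independent Z, W ~ N(0,1) and θ ∈ [0,π],
2 E[φ₊(Z)² φ₊(cos θ Z + sin θ W)²] = (3 sin θ cos θ + (π−θ)(1+2cos²θ))/π. -/
theorem stmt_13 {Ω : Type*} [MeasureSpace Ω] [IsProbabilityMeasure (ℙ : Measure Ω)]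
    (Z W : Ω → ℝ) (hZm : Measurable Z) (hWm : Measurable W)
    (hZ : Measure.map Z ℙ = gaussianReal 0 1)
    (hW : Measure.map W ℙ = gaussianReal 0 1)
    (hZW : IndepFun Z W ℙ)
    (θ : ℝ) (hθ : θ ∈ Set.Icc 0 π) :
    2 * ∫ ω, max (Z ω) 0 ^ 2 * max (Real.cos θ * Z ω + Real.sin θ * W ω) 0 ^ 2 ∂ℙ
      = (3 * Real.sin θ * Real.cos θ + (π - θ) * (1 + 2 * Real.cos θ ^ 2)) / π := by
  set F : ℝ × ℝ → ℝ := fun p ↦ max p.1 0 ^ 2 * max (cos θ * p.1 + sin θ * p.2) 0 ^ 2 with hF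
  have hlaw : Measure.map (fun ω ↦ (Z ω, W ω)) ℙ = (gaussianReal 0 1).prod (gaussianReal 0 1) := by
    rw [(indepFun_iff_map_prod_eq_prod_map_map hZm.aemeasurable hWm.aemeasurable).mp hZW, hZ, hW]
  have hhom : ∀ r > 0, ∀ p, F (r • p) = r ^ 4 * F p := by
    intro r hr p
    simp only [hF, Prod.smul_fst, Prod.smul_snd, smul_eq_mul]
    have hmax (x : ℝ) : max (r * x) 0 = r * max x 0 := by
      rw [mul_max_of_nonneg _ _ hr.le, mul_zero]
    rw [show cos θ * (r * p.1) + sin θ * (r * p.2) = r * (cos θ * p.1 + sin θ * p.2) by ring,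
      hmax, hmax]
    ring
  have hangle : ∀ t, F (cos t, sin t) = max (cos t) 0 ^ 2 * max (cos (t - θ)) 0 ^ 2 := by
    intro t
    simp only [hF, cos_sub]
    ring_nf
  calc
    _ = 2 * ∫ p, F p ∂((gaussianReal 0 1).prod (gaussianReal 0 1)) := by
      rw [← hlaw, integral_map (hZm.prodMk hWm).aemeasurable (by fun_prop)]
    _ = _ := by
      rw [integral_gaussianReal_prod_of_homogeneous hhom,
        integral_Ioi_pow_five_mul_exp_neg_sq_div_two]
      simp only [hangle]
      rw [integral_max_cos_sq_mul_max_cos_sub_sq hθ]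
      field_simp
end
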